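/- arXiv:1402.4360 — 2 statements merged into one kernel-verified Lean document; each statement's English description precedes it below -/
import Mathlib

section
/- Let X and Y be finite-valued random variables on a probability space and let W be a common part of (X,Y). Then the following are equivalent: (i) H[W] = I[X;Y]; (ii) there exists a finite-valued random variable Z on the same probability space with I[X;Y|Z] = 0, I[Z;X|Y] = 0, and I[Z;Y|X] = 0; (iii) I[X;Y|W] = 0. -/
/-!
Because `W` is a function of `X` and of `Y`, `I[X;Y|W] = I[X;Y] - H[W]`; this gives (i) ⇔ (iii),
and `Z := W` witnesses (iii) ⇒ (ii). Nonnegativity of conditional mutual information (Gibbs'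
inequality) gives `H[W] ≤ I[X;Y]` in general. For the converse under (ii), the Markov chains
`Z - Y - X` and `Z - X - Y` force the conditional law of `Z` given `X = x` to equal that given
`Y = y` whenever `P[X = x, Y = y] > 0`. So this conditional law `V` is a common function of `X`
and `Y`, whence `H[V] ≤ H[W]`, and it is a sufficient statistic of `X` for `Z`. Two applications
of the chain rule then give `I[X;Y] = I[X;Z] = I[V;Z] ≤ H[V]`.
-/

open MeasureTheory Real
open scoped ENNReal

namespace SecureComputation

variable {Ω : Type*} [MeasurableSpace Ω]

/-- The pair random variable `⟨X,Y⟩`. -/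
def pair {𝒳 𝒴 : Type*} (X : Ω → 𝒳) (Y : Ω → 𝒴) : Ω → 𝒳 × 𝒴 := fun ω => (X ω, Y ω)

/-- Shannon entropy `H[X]` of a finite-valued random variable. -/
noncomputable def ent {𝒳 : Type*} (μ : Measure Ω) (X : Ω → 𝒳) : ℝ :=
  ∑' x : 𝒳, negMulLog ((μ (X ⁻¹' {x})).toReal)

/-- Mutual information `I[X;Y]`. -/
noncomputable def mi {𝒳 𝒴 : Type*} (μ : Measure Ω) (X : Ω → 𝒳) (Y : Ω → 𝒴) : ℝ :=
  ent μ X + ent μ Y - ent μ (pair X Y)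

/-- Conditional mutual information `I[X;Y|Z]`. -/
noncomputable def cmi {𝒳 𝒴 𝒵 : Type*} (μ : Measure Ω) (X : Ω → 𝒳) (Y : Ω → 𝒴)
    (Z : Ω → 𝒵) : ℝ :=
  ent μ (pair X Z) + ent μ (pair Y Z) - ent μ (pair (pair X Y) Z) - ent μ Z

/-- Conditional entropy `H[X|Y]`. -/
noncomputable def condEnt {𝒳 𝒴 : Type*} (μ : Measure Ω) (X : Ω → 𝒳) (Y : Ω → 𝒴) : ℝ :=
  ent μ (pair X Y) - ent μ Y

/-- A finite-valued random variable: preimages of points are measurable. -/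
def DiscreteRV {𝒳 : Type*} (X : Ω → 𝒳) : Prop := ∀ x, MeasurableSet (X ⁻¹' {x})

/-- The pair `(X,Y)` is trivial: some finite-valued `Z` on the same space has
`I[X;Y|Z] = 0`, `I[Z;X|Y] = 0`, `I[Z;Y|X] = 0`. -/
def IsTrivialPair {𝒳 𝒴 : Type*} (μ : Measure Ω) (X : Ω → 𝒳) (Y : Ω → 𝒴) : Prop :=
  ∃ (𝒵 : Type) (_ : Fintype 𝒵) (Z : Ω → 𝒵), DiscreteRV Z ∧
    cmi μ X Y Z = 0 ∧ cmi μ Z X Y = 0 ∧ cmi μ Z Y X = 0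

/-- `W` is a common part of the pair `(X,Y)`: it is almost surely a function of `X` alone
and of `Y` alone, and any finite-valued random variable with this property is almost surely
a function of `W`. -/
def IsCommonPart {𝒳 𝒴 𝒲 : Type*} (μ : Measure Ω) (X : Ω → 𝒳) (Y : Ω → 𝒴)
    (W : Ω → 𝒲) : Prop :=
  (∃ f : 𝒳 → 𝒲, ∀ᵐ ω ∂μ, W ω = f (X ω)) ∧
  (∃ g : 𝒴 → 𝒲, ∀ᵐ ω ∂μ, W ω = g (Y ω)) ∧
  ∀ (𝒲' : Type) (_ : Fintype 𝒲') (W' : Ω → 𝒲'),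
    (∃ f' : 𝒳 → 𝒲', ∀ᵐ ω ∂μ, W' ω = f' (X ω)) →
    (∃ g' : 𝒴 → 𝒲', ∀ᵐ ω ∂μ, W' ω = g' (Y ω)) →
    ∃ h : 𝒲 → 𝒲', ∀ᵐ ω ∂μ, W' ω = h (W ω)

section

open Function InformationTheory

variable {μ : Measure Ω} {α β γ ν : Type*}

noncomputable def prob (μ : Measure Ω) (A : Ω → α) (a : α) : ℝ := μ.real (A ⁻¹' {a})

lemma prob_nonneg (A : Ω → α) (a : α) : 0 ≤ prob μ A a := measureReal_nonneg

lemma ent_eq_sum [Fintype α] (A : Ω → α) : ent μ A = ∑ a, negMulLog (prob μ A a) :=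
  tsum_fintype _

lemma prob_congr {A A' : Ω → α} (h : A =ᵐ[μ] A') : prob μ A = prob μ A' :=
  funext fun a => measureReal_congr (h.preimage {a})

lemma ent_congr [Fintype α] {A A' : Ω → α} (h : A =ᵐ[μ] A') : ent μ A = ent μ A' := by
  simp only [ent_eq_sum, prob_congr h]

lemma prob_comp_apply_of_injective {e : α → β} (he : Injective e) (A : Ω → α) (a : α) :
    prob μ (e ∘ A) (e a) = prob μ A a := by
  unfold prob
  congr 1
  ext ω
  simp [he.eq_iff]

lemma prob_comp_of_notMem_range {e : α → β} {b : β} (hb : b ∉ Set.range e) (A : Ω → α) :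
    prob μ (e ∘ A) b = 0 := by
  have : (e ∘ A) ⁻¹' {b} = ∅ := Set.eq_empty_of_forall_notMem fun ω hω => hb ⟨A ω, hω⟩
  simp [prob, this]

lemma prob_pair_comp (A : Ω → α) (f : α → β) (a : α) (b : β) [Decidable (f a = b)] :
    prob μ (pair A (f ∘ A)) (a, b) = if f a = b then prob μ A a else 0 := by
  have he : Injective fun a => (a, f a) := fun _ _ h => congrArg Prod.fst h
  split_ifs with h
  · subst h
    exact prob_comp_apply_of_injective he A a
  · refine prob_comp_of_notMem_range (e := fun a => (a, f a)) ?_ A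
    rintro ⟨a', ha'⟩
    simp only [Prod.mk.injEq] at ha'
    exact h (ha'.1 ▸ ha'.2)

lemma prob_pair_comm (A : Ω → α) (B : Ω → β) (a : α) (b : β) :
    prob μ (pair B A) (b, a) = prob μ (pair A B) (a, b) :=
  prob_comp_apply_of_injective Prod.swap_injective (pair A B) (a, b)

lemma injective_pair_pair_swap : Injective fun t : (α × β) × γ => ((t.1.1, t.2), t.1.2) :=
  LeftInverse.injective (g := fun t : (α × γ) × β => ((t.1.1, t.2), t.1.2)) fun _ => rfl

lemma prob_pair_pair_swap (A : Ω → α) (B : Ω → β) (C : Ω → γ) (a : α) (b : β) (c : γ) :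
    prob μ (pair (pair A C) B) ((a, c), b) = prob μ (pair (pair A B) C) ((a, b), c) :=
  prob_comp_apply_of_injective injective_pair_pair_swap (pair (pair A B) C) ((a, b), c)

lemma ent_comp_of_injective [Fintype α] [Fintype β] {e : α → β} (he : Injective e)
    (A : Ω → α) : ent μ (e ∘ A) = ent μ A := by
  rw [ent_eq_sum, ent_eq_sum]
  refine (Fintype.sum_of_injective e he _ _ (fun b hb => ?_) fun a => ?_).symm
  · rw [prob_comp_of_notMem_range hb, negMulLog_zero]
  · rw [prob_comp_apply_of_injective he]

lemma ent_pair_of_ae_eq_comp [Fintype α] [Fintype β] {A : Ω → α} {B : Ω → β} {f : α → β}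
    (h : B =ᵐ[μ] f ∘ A) : ent μ (pair A B) = ent μ A := by
  have hAB : pair A B =ᵐ[μ] (fun a => (a, f a)) ∘ A :=
    h.mono fun ω hω => by simp only [pair, comp_apply, hω]
  rw [ent_congr hAB, ent_comp_of_injective (fun _ _ h => congrArg Prod.fst h)]

lemma ent_pair_comm [Fintype α] [Fintype β] (A : Ω → α) (B : Ω → β) :
    ent μ (pair B A) = ent μ (pair A B) :=
  ent_comp_of_injective Prod.swap_injective (pair A B)

lemma ent_pair_pair_swap [Fintype α] [Fintype β] [Fintype γ]
    (A : Ω → α) (B : Ω → β) (C : Ω → γ) :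
    ent μ (pair (pair A C) B) = ent μ (pair (pair A B) C) :=
  ent_comp_of_injective injective_pair_pair_swap (pair (pair A B) C)

lemma ent_pair_pair_comm_left [Fintype α] [Fintype β] [Fintype γ]
    (A : Ω → α) (B : Ω → β) (C : Ω → γ) :
    ent μ (pair (pair B A) C) = ent μ (pair (pair A B) C) :=
  ent_comp_of_injective (e := fun t : (α × β) × γ => (t.1.swap, t.2))
    (LeftInverse.injective (g := fun t : (β × α) × γ => (t.1.swap, t.2)) fun _ => rfl)
    (pair (pair A B) C)

lemma mi_comm [Fintype α] [Fintype β] (A : Ω → α) (B : Ω → β) : mi μ A B = mi μ B A := by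
  unfold mi
  rw [ent_pair_comm]
  ring

lemma cmi_comm [Fintype α] [Fintype β] [Fintype γ] (A : Ω → α) (B : Ω → β) (C : Ω → γ) :
    cmi μ A B C = cmi μ B A C := by
  unfold cmi
  rw [ent_pair_pair_comm_left]
  ring

/-- Both sides are `I[A; ⟨B, C⟩]` (chain rule). -/
lemma mi_add_cmi_comm [Fintype α] [Fintype β] [Fintype γ]
    (A : Ω → α) (B : Ω → β) (C : Ω → γ) :
    mi μ A B + cmi μ A C B = mi μ A C + cmi μ A B C := by
  unfold mi cmi
  rw [ent_pair_comm C B, ent_pair_pair_swap]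
  ring

lemma mi_eq_ent_of_ae_eq_comp [Fintype α] [Fintype β] {A : Ω → α} {B : Ω → β} {f : α → β}
    (h : B =ᵐ[μ] f ∘ A) : mi μ A B = ent μ B := by
  unfold mi
  rw [ent_pair_of_ae_eq_comp h]
  ring

lemma cmi_eq_zero_of_ae_eq_comp [Fintype α] [Fintype β] [Fintype γ] {A : Ω → α} {C : Ω → γ}
    {f : γ → α} (h : A =ᵐ[μ] f ∘ C) (B : Ω → β) : cmi μ A B C = 0 := by
  unfold cmi
  rw [ent_pair_comm C A, ent_pair_of_ae_eq_comp h, ent_pair_pair_comm_left B A C,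
    ent_pair_pair_swap B C A, ent_pair_of_ae_eq_comp (f := f ∘ Prod.snd) h]
  ring

lemma cmi_eq_mi_sub_ent_of_ae_eq_comp [Fintype α] [Fintype β] [Fintype γ]
    {X : Ω → α} {Y : Ω → β} {W : Ω → γ} {f : α → γ} {g : β → γ}
    (hf : W =ᵐ[μ] f ∘ X) (hg : W =ᵐ[μ] g ∘ Y) : cmi μ X Y W = mi μ X Y - ent μ W := by
  have := mi_add_cmi_comm (μ := μ) X Y W
  rw [cmi_comm X W, cmi_eq_zero_of_ae_eq_comp hg, mi_eq_ent_of_ae_eq_comp hf] at this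
  linarith

lemma DiscreteRV.prodMk {A : Ω → α} {B : Ω → β} (hA : DiscreteRV A) (hB : DiscreteRV B) :
    DiscreteRV (pair A B) := by
  rintro ⟨a, b⟩
  have : pair A B ⁻¹' {(a, b)} = A ⁻¹' {a} ∩ B ⁻¹' {b} := by
    ext ω
    simp [SecureComputation.pair, Prod.ext_iff]
  rw [this]
  exact (hA a).inter (hB b)

lemma DiscreteRV.comp [Finite α] {A : Ω → α} (hA : DiscreteRV A) (φ : α → β) :
    DiscreteRV (φ ∘ A) := fun b => by
  rw [Set.preimage_comp, ← Set.biUnion_preimage_singleton]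
  exact .biUnion (Set.to_countable _) fun a _ => hA a

section Finite

variable [IsFiniteMeasure μ]

lemma prob_le_prob_comp (A : Ω → α) (φ : α → β) (a : α) : prob μ A a ≤ prob μ (φ ∘ A) (φ a) :=
  measureReal_mono fun ω (hω : A ω = a) => show φ (A ω) = φ a by rw [hω]

lemma prob_eq_zero_of_prob_comp_eq_zero {A : Ω → α} {φ : α → β} {a : α}
    (h : prob μ (φ ∘ A) (φ a) = 0) : prob μ A a = 0 :=
  le_antisymm (h ▸ prob_le_prob_comp A φ a) (prob_nonneg A a)

variable [Fintype α]

lemma prob_comp [DecidableEq β] {A : Ω → α} (hA : DiscreteRV A) (φ : α → β) (b : β) :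
    prob μ (φ ∘ A) b = ∑ a with φ a = b, prob μ A a := by
  unfold prob
  rw [sum_measureReal_preimage_singleton _ fun a _ => hA a]
  congr 1
  ext ω
  simp

lemma sum_prob_pair_left [Fintype γ] {A : Ω → α} {C : Ω → γ} (hA : DiscreteRV A)
    (hC : DiscreteRV C) (c : γ) : ∑ a, prob μ (pair A C) (a, c) = prob μ C c := by
  classical
  rw [show prob μ C c = prob μ (Prod.snd ∘ pair A C) c from rfl, prob_comp (hA.prodMk hC),
    Finset.sum_filter, Fintype.sum_prod_type]
  simp

lemma ent_comp_eq_sum [Fintype β] {A : Ω → α} (hA : DiscreteRV A) (φ : α → β) :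
    ent μ (φ ∘ A) = ∑ a, -(prob μ A a * log (prob μ (φ ∘ A) (φ a))) := by
  classical
  rw [ent_eq_sum, ← Finset.sum_fiberwise Finset.univ φ]
  refine Finset.sum_congr rfl fun b _ => ?_
  rw [Finset.sum_congr rfl fun a ha => by rw [(Finset.mem_filter.1 ha).2],
    Finset.sum_neg_distrib, ← Finset.sum_mul, negMulLog, neg_mul]
  congr 2
  exact prob_comp hA φ b

lemma ent_comp_le [Fintype β] {A : Ω → α} (hA : DiscreteRV A) (φ : α → β) :
    ent μ (φ ∘ A) ≤ ent μ A := by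
  rw [ent_comp_eq_sum hA φ, ent_eq_sum]
  refine Finset.sum_le_sum fun a _ => ?_
  rcases (prob_nonneg (μ := μ) A a).eq_or_lt with h | h
  · simp [← h]
  · rw [negMulLog, neg_mul, neg_le_neg_iff]
    exact mul_le_mul_of_nonneg_left (log_le_log h (prob_le_prob_comp A φ a)) h.le

lemma mi_le_ent_right [Fintype β] {A : Ω → α} {B : Ω → β} (hAB : DiscreteRV (pair A B)) :
    mi μ A B ≤ ent μ B := by
  have : ent μ A ≤ ent μ (pair A B) := ent_comp_le hAB Prod.fst
  unfold mi
  linarith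

end Finite

lemma sum_prob [IsProbabilityMeasure μ] [Fintype α] {A : Ω → α} (hA : DiscreteRV A) :
    ∑ a, prob μ A a = 1 := by
  unfold prob
  rw [sum_measureReal_preimage_singleton _ fun a _ => hA a]
  simp

lemma ae_prob_pos [IsFiniteMeasure μ] [Countable α] (A : Ω → α) :
    ∀ᵐ ω ∂μ, 0 < prob μ A (A ω) := by
  have : ∀ a, ∀ᵐ ω ∂μ, A ω = a → 0 < prob μ A a := fun a => by
    rcases (prob_nonneg A a).eq_or_lt with h | h
    · have : μ (A ⁻¹' {a}) = 0 := (measureReal_eq_zero_iff).1 h.symm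
      exact (measure_eq_zero_iff_ae_notMem.1 this).mono fun ω hω hωa => absurd hωa hω
    · exact ae_of_all μ fun _ _ => h
  exact (ae_all_iff.2 this).mono fun ω h => h (A ω) rfl

lemma mul_log_sub_mul_log_eq_mul_klFun (p : ℝ) {q : ℝ} (hq : 0 < q) :
    p * log p - p * log q = q * klFun (p / q) + (p - q) := by
  rcases eq_or_ne p 0 with rfl | hp
  · simp [klFun_zero]
  · rw [klFun_apply, log_div hp hq.ne']
    field_simp
    ring

section Gibbs

variable {ι : Type*} [Fintype ι] {p q : ι → ℝ}

lemma sum_mul_log_sub_mul_log_eq_sum_klFun (hq : ∀ i, 0 ≤ q i) (hpq : ∀ i, q i = 0 → p i = 0)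
    (hsum : ∑ i, p i = ∑ i, q i) :
    ∑ i, (p i * log (p i) - p i * log (q i)) = ∑ i, q i * klFun (p i / q i) := by
  have h : ∀ i, p i * log (p i) - p i * log (q i) = q i * klFun (p i / q i) + (p i - q i) := by
    intro i
    rcases (hq i).eq_or_lt with h | h
    · simp [← h, hpq i h.symm]
    · exact mul_log_sub_mul_log_eq_mul_klFun _ h
  simp [h, Finset.sum_add_distrib, Finset.sum_sub_distrib, hsum]

theorem sum_mul_log_sub_mul_log_nonneg (hp : ∀ i, 0 ≤ p i) (hq : ∀ i, 0 ≤ q i)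
    (hpq : ∀ i, q i = 0 → p i = 0) (hsum : ∑ i, p i = ∑ i, q i) :
    0 ≤ ∑ i, (p i * log (p i) - p i * log (q i)) := by
  rw [sum_mul_log_sub_mul_log_eq_sum_klFun hq hpq hsum]
  exact Finset.sum_nonneg fun i _ => mul_nonneg (hq i) (klFun_nonneg (div_nonneg (hp i) (hq i)))

theorem sum_mul_log_sub_mul_log_eq_zero_iff (hp : ∀ i, 0 ≤ p i) (hq : ∀ i, 0 ≤ q i)
    (hpq : ∀ i, q i = 0 → p i = 0) (hsum : ∑ i, p i = ∑ i, q i) :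
    ∑ i, (p i * log (p i) - p i * log (q i)) = 0 ↔ p = q := by
  refine ⟨fun h => funext fun i => ?_, fun h => by simp [h]⟩
  rw [sum_mul_log_sub_mul_log_eq_sum_klFun hq hpq hsum, Finset.sum_eq_zero_iff_of_nonneg
    fun i _ => mul_nonneg (hq i) (klFun_nonneg (div_nonneg (hp i) (hq i)))] at h
  rcases (hq i).eq_or_lt with h0 | h0
  · rw [← h0, hpq i h0.symm]
  · have := (mul_eq_zero.1 (h i (Finset.mem_univ i))).resolve_left h0.ne'
    rwa [klFun_eq_zero_iff (div_nonneg (hp i) (hq i)), div_eq_one_iff_eq h0.ne'] at this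

end Gibbs

/-- The mass function `P[A|C] P[B|C] P[C]` of the coupling of `A` and `B` conditionally
independent given `C`. -/
noncomputable def condIndepProb (μ : Measure Ω) (A : Ω → α) (B : Ω → β) (C : Ω → γ)
    (t : (α × β) × γ) : ℝ :=
  prob μ (pair A C) (t.1.1, t.2) * prob μ (pair B C) (t.1.2, t.2) / prob μ C t.2

lemma condIndepProb_nonneg {A : Ω → α} {B : Ω → β} {C : Ω → γ} (t : (α × β) × γ) :
    0 ≤ condIndepProb μ A B C t :=
  div_nonneg (mul_nonneg (prob_nonneg _ _) (prob_nonneg _ _)) (prob_nonneg _ _)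

lemma prob_eq_zero_of_condIndepProb_eq_zero [IsFiniteMeasure μ] {A : Ω → α} {B : Ω → β}
    {C : Ω → γ} (t : (α × β) × γ) (ht : condIndepProb μ A B C t = 0) :
    prob μ (pair (pair A B) C) t = 0 := by
  rcases div_eq_zero_iff.1 ht with h | h
  · rcases mul_eq_zero.1 h with h | h
    · exact prob_eq_zero_of_prob_comp_eq_zero (A := pair (pair A B) C)
        (φ := fun t => (t.1.1, t.2)) h
    · exact prob_eq_zero_of_prob_comp_eq_zero (A := pair (pair A B) C)
        (φ := fun t => (t.1.2, t.2)) h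
  · exact prob_eq_zero_of_prob_comp_eq_zero (A := pair (pair A B) C) (φ := Prod.snd) h

lemma prob_eq_condIndepProb_iff [IsFiniteMeasure μ] {A : Ω → α} {B : Ω → β} {C : Ω → γ}
    (a : α) (b : β) (c : γ) :
    prob μ (pair (pair A B) C) ((a, b), c) = condIndepProb μ A B C ((a, b), c) ↔
      prob μ (pair (pair A B) C) ((a, b), c) * prob μ C c
        = prob μ (pair A C) (a, c) * prob μ (pair B C) (b, c) := by
  rcases (prob_nonneg (μ := μ) C c).eq_or_lt with h | h
  · have hABC := prob_eq_zero_of_prob_comp_eq_zero (A := pair (pair A B) C) (φ := Prod.snd)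
      (a := ((a, b), c)) h.symm
    have hAC := prob_eq_zero_of_prob_comp_eq_zero (A := pair A C) (φ := Prod.snd) (a := (a, c))
      h.symm
    simp [condIndepProb, hABC, hAC, ← h]
  · exact eq_div_iff h.ne'

section CondIndep

variable [IsProbabilityMeasure μ] [Fintype α] [Fintype β] [Fintype γ]
  {A : Ω → α} {B : Ω → β} {C : Ω → γ}

lemma sum_condIndepProb (hA : DiscreteRV A) (hB : DiscreteRV B) (hC : DiscreteRV C) :
    ∑ t, condIndepProb μ A B C t = 1 := by
  calc ∑ t, condIndepProb μ A B C t
      = ∑ c, ∑ b, ∑ a, prob μ (pair A C) (a, c) * prob μ (pair B C) (b, c) / prob μ C c := by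
        simp only [Fintype.sum_prod_type_right, condIndepProb]
    _ = ∑ c, prob μ C c * prob μ C c / prob μ C c := by
        simp only [← Finset.sum_div, ← Finset.sum_mul, sum_prob_pair_left hA hC, ← Finset.mul_sum,
          sum_prob_pair_left hB hC]
    _ = 1 := by simp only [mul_self_div_self, sum_prob hC]

lemma cmi_eq_sum_mul_log_sub (hA : DiscreteRV A) (hB : DiscreteRV B) (hC : DiscreteRV C) :
    cmi μ A B C = ∑ t, (prob μ (pair (pair A B) C) t * log (prob μ (pair (pair A B) C) t)
      - prob μ (pair (pair A B) C) t * log (condIndepProb μ A B C t)) := by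
  set P := prob μ (pair (pair A B) C)
  have hT : DiscreteRV (pair (pair A B) C) := (hA.prodMk hB).prodMk hC
  have hAC : ent μ (pair A C) = ∑ t, -(P t * log (prob μ (pair A C) (t.1.1, t.2))) :=
    ent_comp_eq_sum hT fun t => (t.1.1, t.2)
  have hBC : ent μ (pair B C) = ∑ t, -(P t * log (prob μ (pair B C) (t.1.2, t.2))) :=
    ent_comp_eq_sum hT fun t => (t.1.2, t.2)
  have hC : ent μ C = ∑ t, -(P t * log (prob μ C t.2)) := ent_comp_eq_sum hT Prod.snd
  have hABC : ent μ (pair (pair A B) C) = ∑ t, -(P t * log (P t)) := ent_comp_eq_sum hT id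
  unfold cmi
  rw [hAC, hBC, hABC, hC, ← Finset.sum_add_distrib, ← Finset.sum_sub_distrib,
    ← Finset.sum_sub_distrib]
  refine Finset.sum_congr rfl fun t _ => ?_
  rcases (prob_nonneg (μ := μ) (pair (pair A B) C) t).eq_or_lt with h | h
  · simp [P, ← h]
  have hAC : 0 < prob μ (pair A C) (t.1.1, t.2) :=
    h.trans_le (prob_le_prob_comp _ (fun t => (t.1.1, t.2)) t)
  have hBC : 0 < prob μ (pair B C) (t.1.2, t.2) :=
    h.trans_le (prob_le_prob_comp _ (fun t => (t.1.2, t.2)) t)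
  have hC : 0 < prob μ C t.2 := h.trans_le (prob_le_prob_comp _ Prod.snd t)
  rw [condIndepProb, log_div (by positivity) hC.ne', log_mul hAC.ne' hBC.ne']
  ring

theorem cmi_nonneg (hA : DiscreteRV A) (hB : DiscreteRV B) (hC : DiscreteRV C) :
    0 ≤ cmi μ A B C := by
  rw [cmi_eq_sum_mul_log_sub hA hB hC]
  exact sum_mul_log_sub_mul_log_nonneg (prob_nonneg _) condIndepProb_nonneg
    prob_eq_zero_of_condIndepProb_eq_zero
    (by rw [sum_prob ((hA.prodMk hB).prodMk hC), sum_condIndepProb hA hB hC])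

theorem cmi_eq_zero_iff (hA : DiscreteRV A) (hB : DiscreteRV B) (hC : DiscreteRV C) :
    cmi μ A B C = 0 ↔ ∀ a b c, prob μ (pair (pair A B) C) ((a, b), c) * prob μ C c
      = prob μ (pair A C) (a, c) * prob μ (pair B C) (b, c) := by
  rw [cmi_eq_sum_mul_log_sub hA hB hC, sum_mul_log_sub_mul_log_eq_zero_iff (prob_nonneg _)
    condIndepProb_nonneg prob_eq_zero_of_condIndepProb_eq_zero
    (by rw [sum_prob ((hA.prodMk hB).prodMk hC), sum_condIndepProb hA hB hC]), funext_iff]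
  simp only [Prod.forall, prob_eq_condIndepProb_iff]

end CondIndep

/-- The conditional law of `Z` given `A = a`; it is zero when `P[A = a] = 0`. -/
noncomputable def condLaw (μ : Measure Ω) (Z : Ω → γ) (A : Ω → α) (a : α) : γ → ℝ :=
  fun z => prob μ (pair Z A) (z, a) / prob μ A a

lemma prob_pair_mul_prob_eq_of_condLaw_eq [IsFiniteMeasure μ] {Z : Ω → γ} {A : Ω → α}
    {a a' : α} (h : condLaw μ Z A a = condLaw μ Z A a') (z : γ) :
    prob μ (pair Z A) (z, a) * prob μ A a' = prob μ (pair Z A) (z, a') * prob μ A a := by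
  have hle : ∀ a, prob μ A a = 0 → prob μ (pair Z A) (z, a) = 0 := fun a ha =>
    prob_eq_zero_of_prob_comp_eq_zero (φ := Prod.snd) ha
  rcases (prob_nonneg (μ := μ) A a).eq_or_lt with ha | ha
  · simp [hle a ha.symm, ← ha]
  rcases (prob_nonneg (μ := μ) A a').eq_or_lt with ha' | ha'
  · simp [hle a' ha'.symm, ← ha']
  exact (div_eq_div_iff ha.ne' ha'.ne').1 (congrFun h z)

theorem cmi_comp_eq_zero_of_condLaw_eq [IsProbabilityMeasure μ] [Fintype α] [Fintype γ]
    [Fintype ν] {Z : Ω → γ} {A : Ω → α} (hZ : DiscreteRV Z) (hA : DiscreteRV A)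
    {e : α → ν} (he : ∀ a a', e a = e a' → condLaw μ Z A a = condLaw μ Z A a') :
    cmi μ Z A (e ∘ A) = 0 := by
  classical
  rw [cmi_eq_zero_iff hZ hA (hA.comp e)]
  intro z a v
  have hZAV : prob μ (pair (pair Z A) (e ∘ A)) ((z, a), v)
      = if e a = v then prob μ (pair Z A) (z, a) else 0 :=
    prob_pair_comp (pair Z A) (e ∘ Prod.snd) (z, a) v
  have hZV : prob μ (pair Z (e ∘ A)) (z, v) = ∑ a' with e a' = v, prob μ (pair Z A) (z, a') := by
    rw [show pair Z (e ∘ A) = (fun t => (t.1, e t.2)) ∘ pair Z A from rfl,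
      prob_comp (hZ.prodMk hA), Finset.sum_filter, Finset.sum_filter, Fintype.sum_prod_type]
    simp [Prod.ext_iff, ite_and]
  rw [hZAV, prob_pair_comp A e a v, prob_comp hA e v, hZV]
  split_ifs with hav
  · rw [Finset.mul_sum, Finset.sum_mul]
    refine Finset.sum_congr rfl fun a' ha' => ?_
    exact prob_pair_mul_prob_eq_of_condLaw_eq
      (he a a' (hav.trans (Finset.mem_filter.1 ha').2.symm)) z
  · simp

section DoubleMarkov

variable [IsProbabilityMeasure μ] [Fintype α] [Fintype β] [Fintype γ]
  {X : Ω → α} {Y : Ω → β} {Z : Ω → γ}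

lemma condLaw_eq_of_cmi_eq_zero (hX : DiscreteRV X) (hY : DiscreteRV Y) (hZ : DiscreteRV Z)
    (hZX_Y : cmi μ Z X Y = 0) (hZY_X : cmi μ Z Y X = 0) {x : α} {y : β}
    (hxy : 0 < prob μ (pair X Y) (x, y)) : condLaw μ Z X x = condLaw μ Z Y y := by
  have hx : 0 < prob μ X x := hxy.trans_le (prob_le_prob_comp _ Prod.fst (x, y))
  have hy : 0 < prob μ Y y := hxy.trans_le (prob_le_prob_comp _ Prod.snd (x, y))
  funext z
  have hfacY := (cmi_eq_zero_iff hZ hX hY).1 hZX_Y z x y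
  have hfacX := (cmi_eq_zero_iff hZ hY hX).1 hZY_X z y x
  rw [prob_pair_pair_swap, prob_pair_comm X Y] at hfacX
  rw [condLaw, condLaw, div_eq_div_iff hx.ne' hy.ne']
  refine mul_left_cancel₀ hxy.ne' ?_
  linear_combination prob μ X x * hfacY - prob μ Y y * hfacX

lemma condLaw_comp_ae_eq (hX : DiscreteRV X) (hY : DiscreteRV Y) (hZ : DiscreteRV Z)
    (hZX_Y : cmi μ Z X Y = 0) (hZY_X : cmi μ Z Y X = 0) :
    condLaw μ Z X ∘ X =ᵐ[μ] condLaw μ Z Y ∘ Y :=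
  (ae_prob_pos (pair X Y)).mono fun _ hω => condLaw_eq_of_cmi_eq_zero hX hY hZ hZX_Y hZY_X hω

end DoubleMarkov

lemma IsCommonPart.ent_le [IsProbabilityMeasure μ] {𝒳 𝒴 𝒲 𝒱 : Type} [Fintype 𝒲] [Fintype 𝒱]
    {X : Ω → 𝒳} {Y : Ω → 𝒴} {W : Ω → 𝒲} (hcp : IsCommonPart μ X Y W) (hW : DiscreteRV W)
    {V : Ω → 𝒱} {f : 𝒳 → 𝒱} {g : 𝒴 → 𝒱} (hf : V =ᵐ[μ] f ∘ X) (hg : V =ᵐ[μ] g ∘ Y) :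
    ent μ V ≤ ent μ W := by
  obtain ⟨h, hh⟩ := hcp.2.2 𝒱 inferInstance V ⟨f, hf⟩ ⟨g, hg⟩
  calc ent μ V = ent μ (h ∘ W) := ent_congr hh
    _ ≤ ent μ W := ent_comp_le hW h

theorem mi_le_ent_of_isTrivialPair [IsProbabilityMeasure μ] {𝒳 𝒴 𝒲 : Type} [Fintype 𝒳]
    [Fintype 𝒴] [Fintype 𝒲] [Nonempty 𝒳] {X : Ω → 𝒳} {Y : Ω → 𝒴} {W : Ω → 𝒲}
    (hX : DiscreteRV X) (hY : DiscreteRV Y) (hW : DiscreteRV W) (hcp : IsCommonPart μ X Y W)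
    (htriv : IsTrivialPair μ X Y) : mi μ X Y ≤ ent μ W := by
  obtain ⟨𝒵, _, Z, hZ, hXY_Z, hZX_Y, hZY_X⟩ := htriv
  set φ := condLaw μ Z X
  -- the conditional law of `Z` given `X`, encoded back in `𝒳` through a right inverse of `φ`
  set V := (invFun φ ∘ φ) ∘ X
  have hφ : ∀ x x', (invFun φ ∘ φ) x = (invFun φ ∘ φ) x' → φ x = φ x' := fun x x' h => by
    simpa only [comp_apply, invFun_eq ⟨x, rfl⟩, invFun_eq ⟨x', rfl⟩] using congrArg φ h
  have hXY : mi μ X Y = mi μ X Z := by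
    have := mi_add_cmi_comm (μ := μ) X Y Z
    rw [cmi_comm, hZX_Y, hXY_Z] at this
    linarith
  have hZV : mi μ Z X = mi μ Z V := by
    have := mi_add_cmi_comm (μ := μ) Z V X
    rw [cmi_comm Z V, cmi_eq_zero_of_ae_eq_comp Filter.EventuallyEq.rfl,
      cmi_comp_eq_zero_of_condLaw_eq hZ hX hφ] at this
    linarith
  calc mi μ X Y = mi μ Z V := by rw [hXY, mi_comm, hZV]
    _ ≤ ent μ V := mi_le_ent_right (hZ.prodMk (hX.comp _))
    _ ≤ ent μ W := hcp.ent_le hW (g := invFun φ ∘ condLaw μ Z Y) Filter.EventuallyEq.rfl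
        ((condLaw_comp_ae_eq hX hY hZ hZX_Y hZY_X).fun_comp (invFun φ))

end

theorem stmt2_general {Ω : Type*} [MeasurableSpace Ω] (μ : Measure Ω) [IsProbabilityMeasure μ]
    {𝒳 𝒴 𝒲 : Type} [Fintype 𝒳] [Fintype 𝒴] [Fintype 𝒲]
    [Nonempty 𝒳]
    (X : Ω → 𝒳) (Y : Ω → 𝒴) (W : Ω → 𝒲)
    (hX : DiscreteRV X) (hY : DiscreteRV Y) (hW : DiscreteRV W)
    (hcp : IsCommonPart μ X Y W) :
    [ent μ W = mi μ X Y, IsTrivialPair μ X Y, cmi μ X Y W = 0].TFAE := by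
  obtain ⟨f, hf⟩ := hcp.1
  obtain ⟨g, hg⟩ := hcp.2.1
  have hcmi : cmi μ X Y W = mi μ X Y - ent μ W := cmi_eq_mi_sub_ent_of_ae_eq_comp hf hg
  tfae_have 1 ↔ 3 := by rw [hcmi, sub_eq_zero, eq_comm]
  tfae_have 3 → 2 := fun h =>
    ⟨𝒲, inferInstance, W, hW, h, cmi_eq_zero_of_ae_eq_comp hg X, cmi_eq_zero_of_ae_eq_comp hf Y⟩
  tfae_have 2 → 1 := fun h =>
    le_antisymm (by linarith [cmi_nonneg (μ := μ) hX hY hW])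
      (mi_le_ent_of_isTrivialPair hX hY hW hcp h)
  tfae_finish

/-- For a common part `W` of `(X,Y)`, the following are equivalent:
(i) `H[W] = I[X;Y]`; (ii) the pair `(X,Y)` is trivial; (iii) `I[X;Y|W] = 0`. -/
theorem stmt2 {Ω : Type*} [MeasurableSpace Ω] (μ : Measure Ω) [IsProbabilityMeasure μ]
    {𝒳 𝒴 𝒲 : Type} [Fintype 𝒳] [Fintype 𝒴] [Fintype 𝒲]
    [Nonempty 𝒳] [Nonempty 𝒴] [Nonempty 𝒲]
    (X : Ω → 𝒳) (Y : Ω → 𝒴) (W : Ω → 𝒲)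
    (hX : DiscreteRV X) (hY : DiscreteRV Y) (hW : DiscreteRV W)
    (hcp : IsCommonPart μ X Y W) :
    [ent μ W = mi μ X Y, IsTrivialPair μ X Y, cmi μ X Y W = 0].TFAE :=
  stmt2_general μ X Y W hX hY hW hcp

end SecureComputation
end

section
/- Let R and S be finite-valued random variables on a probability space such that the pair (R,S) is trivial, and let f and g be deterministic functions on the ranges of R and S respectively. Then the pair (⟨R, g ∘ S⟩, ⟨S, f ∘ R⟩) is trivial. -/
/-!
Take `Z' = ⟨Z, f ∘ R, g ∘ S⟩`. In each of the three conditional mutual informations of the new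
pair, the components that are functions of the conditioning variable can be dropped, which
leaves `I[R;S | Z, g∘S, f∘R]`, `I[Z;R | S, f∘R]` and `I[Z;S | R, g∘S]`. These vanish: by the
chain rule `I[X;Y|Z] = I[X;φ∘Y|Z] + I[X;Y|Z,φ∘Y]` and nonnegativity of both terms, adjoining a
function of `Y` to the condition keeps `I[X;Y|Z] = 0`. Nonnegativity of `I[X;Y|Z]` is the
subadditivity of entropy, i.e. Gibbs' inequality, applied on every fibre of `Z`.
-/

open MeasureTheory Real
open scoped ENNReal

namespace SecureComputation

variable {Ω : Type*} [MeasurableSpace Ω]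

lemma mul_log_add_log_sub_log_sub_log_le {p a b c : ℝ} (hp : 0 ≤ p) (ha : p ≤ a) (hb : p ≤ b)
    (hc : p ≤ c) : p * (log a + log b - log p - log c) ≤ a * b / c - p := by
  rcases hp.eq_or_lt with rfl | hp
  · simpa using div_nonneg (mul_nonneg ha hb) hc
  have ha' := hp.trans_le ha
  have hb' := hp.trans_le hb
  have hc' := hp.trans_le hc
  have hlog : log a + log b - log p - log c = log (a * b / c / p) := by
    rw [log_div (by positivity) hp.ne', log_div (by positivity) hc'.ne',
      log_mul ha'.ne' hb'.ne']
    ring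
  calc p * (log a + log b - log p - log c) ≤ p * (a * b / c / p - 1) := by
        rw [hlog]; exact mul_le_mul_of_nonneg_left (log_le_sub_one_of_pos (by positivity)) hp.le
    _ = a * b / c - p := by field_simp

/-- Subadditivity of entropy, `H(X,Y) ≤ H(X) + H(Y)`, for an unnormalized joint law `p`. -/
theorem sum_negMulLog_add_negMulLog_sum_le {ι κ : Type*} [Fintype ι] [Fintype κ]
    (p : ι → κ → ℝ) (hp : ∀ i j, 0 ≤ p i j) :
    ∑ i, ∑ j, negMulLog (p i j) + negMulLog (∑ i, ∑ j, p i j)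
      ≤ ∑ i, negMulLog (∑ j, p i j) + ∑ j, negMulLog (∑ i, p i j) := by
  set a := fun i => ∑ j, p i j
  set b := fun j => ∑ i, p i j
  set c := ∑ i, ∑ j, p i j
  have hpa : ∀ i j, p i j ≤ a i := fun i j =>
    Finset.single_le_sum (fun j _ => hp i j) (Finset.mem_univ j)
  have hpb : ∀ i j, p i j ≤ b j := fun i j =>
    Finset.single_le_sum (fun i _ => hp i j) (Finset.mem_univ i)
  have hac : ∀ i, a i ≤ c := fun i =>
    Finset.single_le_sum (fun i _ => Finset.sum_nonneg fun j _ => hp i j) (Finset.mem_univ i)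
  have hgibbs : ∑ i, ∑ j, p i j * (log (a i) + log (b j) - log (p i j) - log c)
      ≤ ∑ i, ∑ j, (a i * b j / c - p i j) :=
    Finset.sum_le_sum fun i _ => Finset.sum_le_sum fun j _ =>
      mul_log_add_log_sub_log_sub_log_le (hp i j) (hpa i j) (hpb i j) ((hpa i j).trans (hac i))
  have hmass : ∑ i, ∑ j, (a i * b j / c - p i j) = 0 := by
    have hb : ∑ j, b j = c := Finset.sum_comm
    simp only [Finset.sum_sub_distrib, ← Finset.sum_div, ← Finset.mul_sum, ← Finset.sum_mul, hb]
    rw [mul_self_div_self, sub_self]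
  have hsplit : ∑ i, ∑ j, p i j * (log (a i) + log (b j) - log (p i j) - log c)
      = ∑ i, a i * log (a i) + ∑ j, b j * log (b j) - ∑ i, ∑ j, p i j * log (p i j)
        - c * log c := by
    simp only [mul_sub, mul_add, Finset.sum_sub_distrib, Finset.sum_add_distrib, ← Finset.sum_mul]
    rw [Finset.sum_comm (f := fun i j => p i j * log (b j))]
    simp only [← Finset.sum_mul]
    rfl
  simp only [negMulLog_eq_neg, Finset.sum_neg_distrib]
  linarith

section

variable {𝒳 𝒴 𝒵 : Type*}

lemma preimage_pair_singleton {α : Type*} (X : α → 𝒳) (Y : α → 𝒴) (x : 𝒳) (y : 𝒴) :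
    pair X Y ⁻¹' {(x, y)} = X ⁻¹' {x} ∩ Y ⁻¹' {y} := by
  ext ω
  simp [pair]

lemma DiscreteRV.pair {X : Ω → 𝒳} {Y : Ω → 𝒴} (hX : DiscreteRV X)
    (hY : DiscreteRV Y) : DiscreteRV (pair X Y) := by
  rintro ⟨x, y⟩
  rw [preimage_pair_singleton]
  exact (hX x).inter (hY y)

lemma DiscreteRV.comp_s7 [Finite 𝒳] {X : Ω → 𝒳} (hX : DiscreteRV X)
    (φ : 𝒳 → 𝒴) : DiscreteRV (fun ω => φ (X ω)) := by
  intro y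
  rw [show (fun ω => φ (X ω)) ⁻¹' {y} = ⋃ x ∈ φ ⁻¹' {y}, X ⁻¹' {x} by ext; simp]
  exact MeasurableSet.biUnion (Set.to_countable _) fun x _ => hX x

lemma measureReal_eq_sum_inter_preimage (μ : Measure Ω) [IsFiniteMeasure μ]
    [Fintype 𝒴] {Y : Ω → 𝒴} (hY : DiscreteRV Y) (s : Set Ω) :
    μ.real s = ∑ y, μ.real (s ∩ Y ⁻¹' {y}) := by
  have h := sum_measureReal_preimage_singleton (μ := μ.restrict s) Finset.univ fun y _ => hY y
  simp only [Finset.coe_univ, Set.preimage_univ, measureReal_restrict_apply_univ] at h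
  rw [← h]
  exact Finset.sum_congr rfl fun y _ => by rw [measureReal_restrict_apply (hY y), Set.inter_comm]

section Entropy

variable (μ : Measure Ω) [Fintype 𝒳] [Fintype 𝒴]

lemma ent_eq_sum_s7 (X : Ω → 𝒳) : ent μ X = ∑ x, negMulLog (μ.real (X ⁻¹' {x})) :=
  tsum_fintype _

lemma ent_pair_eq_sum (X : Ω → 𝒳) (Y : Ω → 𝒴) :
    ent μ (pair X Y) = ∑ x, ∑ y, negMulLog (μ.real (X ⁻¹' {x} ∩ Y ⁻¹' {y})) := by
  simp only [ent_eq_sum_s7, Fintype.sum_prod_type, preimage_pair_singleton]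

lemma ent_pair_comm_s7 (X : Ω → 𝒳) (Y : Ω → 𝒴) : ent μ (pair X Y) = ent μ (pair Y X) := by
  simp only [ent_pair_eq_sum, Set.inter_comm (X ⁻¹' _)]
  exact Finset.sum_comm

lemma ent_pair_eq_of_ker_le {X : Ω → 𝒳} {Y : Ω → 𝒴} (h : Setoid.ker X ≤ Setoid.ker Y) :
    ent μ (pair X Y) = ent μ X := by
  rw [ent_pair_eq_sum, ent_eq_sum_s7]
  refine Finset.sum_congr rfl fun x _ => ?_
  rcases (X ⁻¹' {x}).eq_empty_or_nonempty with hx | ⟨ω₀, hω₀⟩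
  · simp [hx]
  have hsub : X ⁻¹' {x} ⊆ Y ⁻¹' {Y ω₀} := fun ω hω => h (hω.trans hω₀.symm)
  rw [Finset.sum_eq_single (Y ω₀), Set.inter_eq_left.2 hsub]
  · intro y _ hy
    have hempty : X ⁻¹' {x} ∩ Y ⁻¹' {y} = ∅ :=
      Set.eq_empty_of_forall_notMem fun ω hω => hy ((hω.2 : Y ω = y).symm.trans (hsub hω.1))
    rw [hempty, measureReal_empty, negMulLog_zero]
  · simp

lemma ent_eq_of_ker_eq {X : Ω → 𝒳} {Y : Ω → 𝒴} (h : Setoid.ker X = Setoid.ker Y) :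
    ent μ X = ent μ Y := by
  rw [← ent_pair_eq_of_ker_le μ h.le, ent_pair_comm_s7, ent_pair_eq_of_ker_le μ h.ge]

end Entropy

section ConditionalMutualInformation

variable (μ : Measure Ω) [Fintype 𝒳] [Fintype 𝒴] [Fintype 𝒵]

theorem cmi_nonneg_s7 [IsFiniteMeasure μ] {X : Ω → 𝒳} {Y : Ω → 𝒴} {Z : Ω → 𝒵}
    (hX : DiscreteRV X) (hY : DiscreteRV Y) : 0 ≤ cmi μ X Y Z := by
  set p := fun x y z => μ.real (X ⁻¹' {x} ∩ Y ⁻¹' {y} ∩ Z ⁻¹' {z})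
  have hXZ : ∀ x z, μ.real (X ⁻¹' {x} ∩ Z ⁻¹' {z}) = ∑ y, p x y z := fun x z => by
    rw [measureReal_eq_sum_inter_preimage μ hY]
    exact Finset.sum_congr rfl fun y _ => by rw [Set.inter_right_comm]
  have hYZ : ∀ y z, μ.real (Y ⁻¹' {y} ∩ Z ⁻¹' {z}) = ∑ x, p x y z := fun y z => by
    rw [measureReal_eq_sum_inter_preimage μ hX]
    exact Finset.sum_congr rfl fun x _ => by rw [Set.inter_comm, ← Set.inter_assoc]
  have hZ : ∀ z, μ.real (Z ⁻¹' {z}) = ∑ x, ∑ y, p x y z := fun z => by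
    rw [measureReal_eq_sum_inter_preimage μ hX]
    exact Finset.sum_congr rfl fun x _ => by rw [Set.inter_comm, hXZ]
  have hent : ∀ z, ∑ x, ∑ y, negMulLog (p x y z) + negMulLog (μ.real (Z ⁻¹' {z}))
      ≤ ∑ x, negMulLog (μ.real (X ⁻¹' {x} ∩ Z ⁻¹' {z}))
        + ∑ y, negMulLog (μ.real (Y ⁻¹' {y} ∩ Z ⁻¹' {z})) := fun z => by
    simpa only [hXZ, hYZ, hZ] using
      sum_negMulLog_add_negMulLog_sum_le (p · · z) fun x y => measureReal_nonneg
  have hXYZ : ent μ (pair (pair X Y) Z) = ∑ z, ∑ x, ∑ y, negMulLog (p x y z) := by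
    rw [ent_pair_eq_sum, Fintype.sum_prod_type]
    simp only [preimage_pair_singleton]
    exact (Finset.sum_congr rfl fun x _ => Finset.sum_comm).trans Finset.sum_comm
  have hent_XZ : ent μ (pair X Z) = ∑ z, ∑ x, negMulLog (μ.real (X ⁻¹' {x} ∩ Z ⁻¹' {z})) := by
    rw [ent_pair_eq_sum, Finset.sum_comm]
  have hent_YZ : ent μ (pair Y Z) = ∑ z, ∑ y, negMulLog (μ.real (Y ⁻¹' {y} ∩ Z ⁻¹' {z})) := by
    rw [ent_pair_eq_sum, Finset.sum_comm]
  have hsum := Finset.sum_le_sum fun z (_ : z ∈ (Finset.univ : Finset 𝒵)) => hent z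
  rw [Finset.sum_add_distrib, Finset.sum_add_distrib] at hsum
  rw [cmi, hent_XZ, hent_YZ, hXYZ, ent_eq_sum_s7]
  linarith

lemma cmi_comm_s7 (X : Ω → 𝒳) (Y : Ω → 𝒴) (Z : Ω → 𝒵) : cmi μ X Y Z = cmi μ Y X Z := by
  have h : ent μ (pair (pair X Y) Z) = ent μ (pair (pair Y X) Z) :=
    ent_eq_of_ker_eq μ (Setoid.ext fun _ _ => by grind [pair, Setoid.ker])
  rw [cmi, cmi, h]
  ring

lemma cmi_congr_of_ker_eq {𝒳' 𝒴' 𝒵' : Type*} [Fintype 𝒳'] [Fintype 𝒴'] [Fintype 𝒵']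
    {X : Ω → 𝒳} {Y : Ω → 𝒴} {Z : Ω → 𝒵} {X' : Ω → 𝒳'} {Y' : Ω → 𝒴'} {Z' : Ω → 𝒵'}
    (hXZ : Setoid.ker (pair X Z) = Setoid.ker (pair X' Z'))
    (hYZ : Setoid.ker (pair Y Z) = Setoid.ker (pair Y' Z'))
    (hXYZ : Setoid.ker (pair (pair X Y) Z) = Setoid.ker (pair (pair X' Y') Z'))
    (hZ : Setoid.ker Z = Setoid.ker Z') : cmi μ X Y Z = cmi μ X' Y' Z' := by
  simp only [cmi, ent_eq_of_ker_eq μ hXZ, ent_eq_of_ker_eq μ hYZ, ent_eq_of_ker_eq μ hXYZ,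
    ent_eq_of_ker_eq μ hZ]

lemma cmi_comp_add_cmi_pair_comp {𝓜 : Type*} [Fintype 𝓜] (X : Ω → 𝒳) (Y : Ω → 𝒴)
    (Z : Ω → 𝒵) (φ : 𝒴 → 𝓜) :
    cmi μ X (fun ω => φ (Y ω)) Z + cmi μ X Y (pair Z (fun ω => φ (Y ω))) = cmi μ X Y Z := by
  have h₁ : ent μ (pair X (pair Z (fun ω => φ (Y ω))))
      = ent μ (pair (pair X (fun ω => φ (Y ω))) Z) :=
    ent_eq_of_ker_eq μ (Setoid.ext fun _ _ => by grind [pair, Setoid.ker])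
  have h₂ : ent μ (pair Y (pair Z (fun ω => φ (Y ω)))) = ent μ (pair Y Z) :=
    ent_eq_of_ker_eq μ (Setoid.ext fun _ _ => by grind [pair, Setoid.ker])
  have h₃ : ent μ (pair (pair X Y) (pair Z (fun ω => φ (Y ω)))) = ent μ (pair (pair X Y) Z) :=
    ent_eq_of_ker_eq μ (Setoid.ext fun _ _ => by grind [pair, Setoid.ker])
  rw [cmi, cmi, cmi, h₁, h₂, h₃, ent_pair_comm_s7 μ (fun ω => φ (Y ω))]
  ring

lemma cmi_pair_comp_right_eq_zero [IsFiniteMeasure μ] {𝓜 : Type*} [Fintype 𝓜] {X : Ω → 𝒳}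
    {Y : Ω → 𝒴} {Z : Ω → 𝒵} (hX : DiscreteRV X) (hY : DiscreteRV Y) (φ : 𝒴 → 𝓜)
    (h : cmi μ X Y Z = 0) : cmi μ X Y (pair Z (fun ω => φ (Y ω))) = 0 := by
  have hchain := cmi_comp_add_cmi_pair_comp μ X Y Z φ
  have h₁ := cmi_nonneg_s7 μ (Z := Z) hX (hY.comp_s7 φ)
  have h₂ := cmi_nonneg_s7 μ (Z := pair Z (fun ω => φ (Y ω))) hX hY
  linarith

lemma cmi_pair_comp_left_eq_zero [IsFiniteMeasure μ] {𝓜 : Type*} [Fintype 𝓜] {X : Ω → 𝒳}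
    {Y : Ω → 𝒴} {Z : Ω → 𝒵} (hX : DiscreteRV X) (hY : DiscreteRV Y) (φ : 𝒳 → 𝓜)
    (h : cmi μ X Y Z = 0) : cmi μ X Y (pair Z (fun ω => φ (X ω))) = 0 := by
  rw [cmi_comm_s7] at h ⊢
  exact cmi_pair_comp_right_eq_zero μ hY hX φ h

end ConditionalMutualInformation

end

theorem stmt7_general {Ω : Type*} [MeasurableSpace Ω] (μ : Measure Ω) [IsProbabilityMeasure μ]
    {𝓡 𝓢 𝓜 𝓝 : Type} [Fintype 𝓡] [Fintype 𝓢] [Fintype 𝓜] [Fintype 𝓝]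
    (R : Ω → 𝓡) (S : Ω → 𝓢) (hR : DiscreteRV R) (hS : DiscreteRV S)
    (htriv : IsTrivialPair μ R S) (f : 𝓡 → 𝓜) (g : 𝓢 → 𝓝) :
    IsTrivialPair μ (pair R (fun ω => g (S ω))) (pair S (fun ω => f (R ω))) := by
  obtain ⟨𝒵, _, Z, hZ, hRS, hZR, hZS⟩ := htriv
  refine ⟨𝒵 × 𝓜 × 𝓝, inferInstance, pair Z (pair (fun ω => f (R ω)) (fun ω => g (S ω))),
    hZ.pair ((hR.comp_s7 f).pair (hS.comp_s7 g)), ?_, ?_, ?_⟩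
  · rw [cmi_congr_of_ker_eq μ (X' := R) (Y' := S)
      (Z' := pair (pair Z (fun ω => g (S ω))) (fun ω => f (R ω)))]
    · exact cmi_pair_comp_left_eq_zero μ hR hS f (cmi_pair_comp_right_eq_zero μ hR hS g hRS)
    all_goals exact Setoid.ext fun _ _ => by grind [pair, Setoid.ker]
  · rw [cmi_congr_of_ker_eq μ (X' := Z) (Y' := R) (Z' := pair S (fun ω => f (R ω)))]
    · exact cmi_pair_comp_right_eq_zero μ hZ hR f hZR
    all_goals exact Setoid.ext fun _ _ => by grind [pair, Setoid.ker]
  · rw [cmi_congr_of_ker_eq μ (X' := Z) (Y' := S) (Z' := pair R (fun ω => g (S ω)))]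
    · exact cmi_pair_comp_right_eq_zero μ hZ hS g hZS
    all_goals exact Setoid.ext fun _ _ => by grind [pair, Setoid.ker]

/-- If `(R,S)` is trivial and `f, g` are deterministic functions, then
`(⟨R, g∘S⟩, ⟨S, f∘R⟩)` is trivial. -/
theorem stmt7 {Ω : Type*} [MeasurableSpace Ω] (μ : Measure Ω) [IsProbabilityMeasure μ]
    {𝓡 𝓢 𝓜 𝓝 : Type} [Fintype 𝓡] [Fintype 𝓢] [Fintype 𝓜] [Fintype 𝓝]
    [Nonempty 𝓡] [Nonempty 𝓢] [Nonempty 𝓜] [Nonempty 𝓝]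
    (R : Ω → 𝓡) (S : Ω → 𝓢) (hR : DiscreteRV R) (hS : DiscreteRV S)
    (htriv : IsTrivialPair μ R S) (f : 𝓡 → 𝓜) (g : 𝓢 → 𝓝) :
    IsTrivialPair μ (pair R (fun ω => g (S ω))) (pair S (fun ω => f (R ω))) :=
  stmt7_general μ R S hR hS htriv f g

end SecureComputation
end
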